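/- For a DMC with zero zero-error capacity (C₀ = 0, with feedback), the zero-rate erasure exponent of error-free feedback block codes equals the two-message erasure exponent: E_x(0) = E_x,2, where E_x(0) = sup over error-free reliable sequences with rate → 0 and message count → ∞ of liminf_n (−log P_era^{(n)})/n, and E_x,2 = liminf_n (−log P_era(2, n, 1))/n. -/

import Mathlib

open scoped BigOperators

/-- A fixed-length block code over input alphabet `X`, output alphabet `Y`, with
noiseless delay-free feedback, `M` messages, block length `n`, randomized decoding
with lists of size at most `L` and an erasure option (`none`). -/
structure FBCode (X Y : Type) [Fintype X] [Fintype Y] (M n L : ℕ) where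
  enc : Fin M → (t : Fin n) → (Fin t.1 → Y) → X
  dec : (Fin n → Y) → Option (Finset (Fin M)) → ℝ
  dec_nonneg : ∀ y o, 0 ≤ dec y o
  dec_sum : ∀ y, ∑ o : Option (Finset (Fin M)), dec y o = 1
  dec_size : ∀ y S, dec y (some S) ≠ 0 → S.card ≤ L

namespace FBCode

variable {X Y : Type} [Fintype X] [Fintype Y]

/-- Probability of observing output sequence `y` when message `m` is sent over the DMC `W`. -/
noncomputable def outProb (W : X → Y → ℝ) {M n L : ℕ} (c : FBCode X Y M n L)
    (m : Fin M) (y : Fin n → Y) : ℝ :=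
  ∏ t : Fin n, W (c.enc m t (fun i => y ⟨i.1, lt_trans i.2 t.2⟩)) (y t)

/-- Erasure probability of the code, uniform prior on messages. -/
noncomputable def Pera (W : X → Y → ℝ) {M n L : ℕ} (c : FBCode X Y M n L) : ℝ :=
  (M : ℝ)⁻¹ * ∑ m : Fin M, ∑ y : Fin n → Y, outProb W c m y * c.dec y none

/-- (Undetected) error probability of the code, uniform prior on messages. -/
noncomputable def Perr (W : X → Y → ℝ) {M n L : ℕ} (c : FBCode X Y M n L) : ℝ :=
  (M : ℝ)⁻¹ * ∑ m : Fin M, ∑ y : Fin n → Y,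
    outProb W c m y * ∑ S : Finset (Fin M), if m ∈ S then 0 else c.dec y (some S)

end FBCode

/-- Minimum error probability of length-`n` feedback codes with `M` equiprobable
messages, list size `L`, erasure probability at most `p`. -/
noncomputable def PeMin {X Y : Type} [Fintype X] [Fintype Y] (W : X → Y → ℝ)
    (M n L : ℕ) (p : ℝ) : ℝ :=
  sInf {e | ∃ c : FBCode X Y M n L, FBCode.Pera W c ≤ p ∧ FBCode.Perr W c = e}

/-- Minimum erasure probability of length-`n` error-free feedback codes with `M`
equiprobable messages and list size `L`. -/
noncomputable def PeraMin {X Y : Type} [Fintype X] [Fintype Y] (W : X → Y → ℝ)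
    (M n L : ℕ) : ℝ :=
  sInf {r | ∃ c : FBCode X Y M n L, FBCode.Perr W c = 0 ∧ FBCode.Pera W c = r}

open Filter

/-!
Because `C₀ = 0`, any two inputs share an output letter of probability at least some `δ > 0`;
hence any two messages of a feedback code share an output sequence of probability at least `δⁿ`,
on which an error-free decoder with lists of size one must erase. This keeps all exponents
finite (at most `-log δ`).

Converse: the two messages of an error-free code with the smallest erasure probabilities form
an error-free two-message code whose erasure probability is at most the average one, so
`P_era(2, n, 1) ≤ P_era(M, n, 1)`.

Achievability: cut the block into `k = n / ℓ` slots of length `ℓ` and send `r = √n` bits one at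
a time with a good two-message code of length `ℓ`, repeating the current bit until the output of
its slot is unambiguous (only one of the two messages could have produced it). Unambiguous slots
are decoded without error, and an erasure needs at least `k - r + 1` ambiguous slots, each of
conditional probability at most `ε = 2 P_era(2, ℓ, 1)` whatever happened before. Hence
`P_era ≤ 2ᵏ ε^(k - r + 1)`, an exponent of at least `-log (2 ε) / ℓ`, and `ℓ` can be chosen so
that this is as close to `E_x,2` as we like.
-/

open Finset FBCode

section CausalKernel

variable {Z : Type*}

def IsCausal {k : ℕ} (Q : Fin k → (Fin k → Z) → Z → ℝ) : Prop :=
  ∀ s z₁ z₂, (∀ j < s, z₁ j = z₂ j) → Q s z₁ = Q s z₂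

namespace IsCausal

variable {k : ℕ} {Q : Fin (k + 1) → (Fin (k + 1) → Z) → Z → ℝ}

lemma tail (hQ : IsCausal Q) (z₀ : Z) :
    IsCausal fun s (z : Fin k → Z) => Q s.succ (Fin.cons z₀ z) := by
  intro s z₁ z₂ h
  refine hQ _ _ _ fun j hj => ?_
  cases j using Fin.cases with
  | zero => rfl
  | succ i => simpa using h i (Fin.succ_lt_succ_iff.mp hj)

lemma apply_zero (hQ : IsCausal Q) (z z' : Fin (k + 1) → Z) : Q 0 z = Q 0 z' :=
  hQ 0 z z' fun j hj => absurd hj (Fin.not_lt_zero j)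

lemma sum_prod_mul_eq [Fintype Z] (hQ : IsCausal Q) (z' : Fin (k + 1) → Z)
    (F : (Fin (k + 1) → Z) → ℝ) :
    ∑ z, (∏ s, Q s z (z s)) * F z =
      ∑ z₀, Q 0 z' z₀ *
        ∑ z : Fin k → Z, (∏ s, Q s.succ (Fin.cons z₀ z) (z s)) * F (Fin.cons z₀ z) := by
  rw [← (Fin.consEquiv fun _ => Z).sum_comp, Fintype.sum_prod_type]
  refine sum_congr rfl fun z₀ _ => ?_
  rw [mul_sum]
  refine sum_congr rfl fun z _ => ?_
  dsimp [Fin.consEquiv]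
  rw [Fin.prod_univ_succ, hQ.apply_zero _ z', Fin.cons_zero, mul_assoc]
  simp only [Fin.cons_succ]

end IsCausal

lemma isCausal_comp_prefix {n : ℕ} (G : (t : Fin n) → (Fin t.1 → Z) → Z → ℝ) :
    IsCausal fun t (y : Fin n → Z) => G t fun i => y ⟨i.1, i.2.trans t.2⟩ :=
  fun t _ _ h => congrArg (G t) (funext fun i => h _ i.2)

variable [Fintype Z]

lemma sum_mul_ite_le_of_sum_filter_le {q : Z → ℝ} (p : Z → Prop) [DecidablePred p]
    {ε a b : ℝ} (hq : ∀ z, 0 ≤ q z) (hq1 : ∑ z, q z = 1) (hp : ∑ z ∈ univ.filter p, q z ≤ ε)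
    (ha : 0 ≤ a) (hb : 0 ≤ b) : ∑ z, q z * (if p z then a else b) ≤ ε * a + b := by
  have hnp : ∑ z ∈ univ.filter (¬ p ·), q z ≤ 1 :=
    hq1 ▸ sum_le_sum_of_subset_of_nonneg (filter_subset _ _) fun z _ _ => hq z
  simp only [mul_ite, sum_ite, ← sum_mul]
  nlinarith

lemma sum_filter_eq_sum_mul_boole {ι : Type*} (s : Finset ι) (P : ι → Prop) [DecidablePred P]
    (f : ι → ℝ) : ∑ i ∈ s.filter P, f i = ∑ i ∈ s, f i * if P i then 1 else 0 := by
  simp [sum_filter]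

variable [Nonempty Z]

theorem IsCausal.sum_prod_eq_one {k : ℕ} {Q : Fin k → (Fin k → Z) → Z → ℝ} (hQ : IsCausal Q)
    (hsum : ∀ s z, ∑ w, Q s z w = 1) : ∑ z, ∏ s, Q s z (z s) = 1 := by
  induction k with
  | zero => simp
  | succ k ih =>
    simpa [ih (hQ.tail _) fun s z => hsum s.succ _, hsum] using
      hQ.sum_prod_mul_eq (fun _ => Classical.arbitrary Z) 1

theorem IsCausal.sum_prod_filter_le_choose_mul_pow {k : ℕ} {Q : Fin k → (Fin k → Z) → Z → ℝ}
    (hQ : IsCausal Q) (hnn : ∀ s z w, 0 ≤ Q s z w) (hsum : ∀ s z, ∑ w, Q s z w = 1)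
    (p : Z → Prop) [DecidablePred p] {ε : ℝ} (hε : 0 ≤ ε)
    (hp : ∀ s z, ∑ w ∈ univ.filter p, Q s z w ≤ ε) (j : ℕ) :
    ∑ z ∈ univ.filter (fun z : Fin k → Z => j ≤ #(univ.filter fun s => p (z s))),
      ∏ s, Q s z (z s) ≤ k.choose j * ε ^ j := by
  induction k generalizing j with
  | zero => cases j <;> simp
  | succ k ih =>
    cases j with
    | zero => simp [hQ.sum_prod_eq_one hsum]
    | succ j =>
      let z' : Fin (k + 1) → Z := fun _ => Classical.arbitrary Z
      have hcard (z₀ : Z) (z : Fin k → Z) :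
          #(univ.filter fun s => p ((Fin.cons z₀ z : Fin (k + 1) → Z) s)) =
            #(univ.filter fun s => p (z s)) + if p z₀ then 1 else 0 := by
        rw [card_filter, card_filter, Fin.sum_univ_succ]
        simp [add_comm]
      have hinner (z₀ : Z) :
          ∑ z : Fin k → Z, (∏ s, Q s.succ (Fin.cons z₀ z) (z s)) *
              (if j + 1 ≤ #(univ.filter fun s => p ((Fin.cons z₀ z : Fin (k + 1) → Z) s))
                then 1 else 0) ≤
            if p z₀ then k.choose j * ε ^ j else k.choose (j + 1) * ε ^ (j + 1) := by
        have ih' := ih (hQ.tail z₀) (fun _ _ _ => hnn _ _ _) (fun _ _ => hsum _ _)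
          (fun _ _ => hp _ _)
        simp only [sum_filter_eq_sum_mul_boole] at ih'
        split_ifs with hz₀
        · simpa [hcard, hz₀] using ih' j
        · simpa [hcard, hz₀, Nat.succ_le_iff] using ih' (j + 1)
      rw [sum_filter_eq_sum_mul_boole, hQ.sum_prod_mul_eq z']
      calc _ ≤ ∑ z₀, Q 0 z' z₀ *
              if p z₀ then k.choose j * ε ^ j else k.choose (j + 1) * ε ^ (j + 1) :=
            sum_le_sum fun z₀ _ => mul_le_mul_of_nonneg_left (hinner z₀) (hnn _ _ _)
        _ ≤ ε * (k.choose j * ε ^ j) + k.choose (j + 1) * ε ^ (j + 1) :=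
            sum_mul_ite_le_of_sum_filter_le p (hnn 0 z') (hsum 0 z') (hp 0 z')
              (by positivity) (by positivity)
        _ = (k + 1).choose (j + 1) * ε ^ (j + 1) := by
            rw [Nat.choose_succ_succ]
            push_cast
            ring

namespace FBCode

variable {X Y : Type} [Fintype X] [Fintype Y] {W : X → Y → ℝ} {M n L : ℕ}

lemma outProb_nonneg (hW0 : ∀ x y, 0 ≤ W x y) (c : FBCode X Y M n L) (m : Fin M)
    (y : Fin n → Y) : 0 ≤ c.outProb W m y :=
  prod_nonneg fun _ _ => hW0 _ _

lemma sum_outProb [Nonempty Y] (hW1 : ∀ x, ∑ y, W x y = 1) (c : FBCode X Y M n L)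
    (m : Fin M) : ∑ y, c.outProb W m y = 1 :=
  (isCausal_comp_prefix fun t h => W (c.enc m t h)).sum_prod_eq_one fun _ _ => hW1 _

lemma dec_none_add_sum_dec_some (c : FBCode X Y M n L) (y : Fin n → Y) :
    c.dec y none + ∑ S, c.dec y (some S) = 1 := by
  rw [← Fintype.sum_option (c.dec y), c.dec_sum]

lemma dec_le_one (c : FBCode X Y M n L) (y : Fin n → Y) (o : Option (Finset (Fin M))) :
    c.dec y o ≤ 1 :=
  c.dec_sum y ▸ single_le_sum (fun o _ => c.dec_nonneg y o) (mem_univ o)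

lemma Pera_nonneg (hW0 : ∀ x y, 0 ≤ W x y) (c : FBCode X Y M n L) : 0 ≤ c.Pera W :=
  mul_nonneg (by positivity) <| sum_nonneg fun _ _ => sum_nonneg fun _ _ =>
    mul_nonneg (c.outProb_nonneg hW0 _ _) (c.dec_nonneg _ _)

lemma Pera_le_one [Nonempty Y] (hW0 : ∀ x y, 0 ≤ W x y) (hW1 : ∀ x, ∑ y, W x y = 1)
    (c : FBCode X Y M n L) : c.Pera W ≤ 1 := by
  have hm (m : Fin M) : ∑ y, c.outProb W m y * c.dec y none ≤ 1 :=
    c.sum_outProb hW1 m ▸ sum_le_sum fun y _ =>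
      mul_le_of_le_one_right (c.outProb_nonneg hW0 m y) (c.dec_le_one y none)
  calc c.Pera W ≤ (M : ℝ)⁻¹ * ∑ _m : Fin M, 1 :=
        mul_le_mul_of_nonneg_left (sum_le_sum fun m _ => hm m) (by positivity)
    _ ≤ 1 := by
        simpa using inv_mul_le_one_of_le₀ le_rfl (Nat.cast_nonneg M)

lemma Perr_eq_zero_iff (hW0 : ∀ x y, 0 ≤ W x y) (c : FBCode X Y M n L) :
    c.Perr W = 0 ↔ ∀ m y S, 0 < c.outProb W m y → m ∉ S → c.dec y (some S) = 0 := by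
  have hS (m : Fin M) (y : Fin n → Y) (S : Finset (Fin M)) :
      0 ≤ if m ∈ S then 0 else c.dec y (some S) := by
    split_ifs
    exacts [le_rfl, c.dec_nonneg _ _]
  rcases Nat.eq_zero_or_pos M with rfl | hM
  · simp [Perr]
  rw [Perr, mul_eq_zero, or_iff_right (by positivity),
    sum_eq_zero_iff_of_nonneg fun m _ => sum_nonneg fun y _ =>
      mul_nonneg (c.outProb_nonneg hW0 m y) (sum_nonneg fun S _ => hS m y S)]
  refine forall_congr' fun m => ?_
  simp only [mem_univ, true_implies]
  rw [sum_eq_zero_iff_of_nonneg fun y _ =>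
    mul_nonneg (c.outProb_nonneg hW0 m y) (sum_nonneg fun S _ => hS m y S)]
  refine forall_congr' fun y => ?_
  simp only [mem_univ, true_implies, mul_eq_zero, sum_eq_zero_iff_of_nonneg fun S _ => hS m y S]
  constructor
  · rintro (h | h) S hy hm
    · exact absurd h hy.ne'
    · simpa [hm] using h S
  · intro h
    rcases (c.outProb_nonneg hW0 m y).eq_or_lt with hy | hy
    · exact Or.inl hy.symm
    · exact Or.inr fun S => by split_ifs with hm; exacts [rfl, h S hy hm]

lemma dec_none_eq_one_of_Perr_eq_zero (hW0 : ∀ x y, 0 ≤ W x y) {c : FBCode X Y M n 1}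
    (hc : c.Perr W = 0) {m₁ m₂ : Fin M} (hne : m₁ ≠ m₂) {y : Fin n → Y}
    (h₁ : 0 < c.outProb W m₁ y) (h₂ : 0 < c.outProb W m₂ y) : c.dec y none = 1 := by
  have hsome (S : Finset (Fin M)) : c.dec y (some S) = 0 := by
    by_contra hS
    have hpair : ¬ {m₁, m₂} ⊆ S := fun h =>
      absurd ((card_pair hne).symm.trans_le ((card_le_card h).trans (c.dec_size y S hS)))
        (by norm_num)
    rcases not_subset.mp hpair with ⟨m, hm, hmS⟩
    rcases mem_insert.mp hm with rfl | hm
    · exact hS ((c.Perr_eq_zero_iff hW0).mp hc _ _ _ h₁ hmS)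
    · exact hS ((c.Perr_eq_zero_iff hW0).mp hc _ _ _ (mem_singleton.mp hm ▸ h₂) hmS)
  simpa [hsome] using c.dec_none_add_sum_dec_some y

end FBCode

section ErasureLowerBound

lemma nonempty_of_sum_eq_one {X Y : Type} [Fintype Y] [Nonempty X] {W : X → Y → ℝ}
    (hW1 : ∀ x, ∑ y, W x y = 1) : Nonempty Y := by
  by_contra h
  simpa [not_nonempty_iff.mp h] using hW1 (Classical.arbitrary X)

lemma exists_pos_forall_exists_le_and_le {X Y : Type} [Fintype X] [Nonempty X] {W : X → Y → ℝ}
    (hC0 : ∀ x x' : X, ∃ y, 0 < W x y ∧ 0 < W x' y) :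
    ∃ δ > 0, ∀ x x' : X, ∃ y, δ ≤ W x y ∧ δ ≤ W x' y := by
  choose g hg₁ hg₂ using hC0
  refine ⟨univ.inf' univ_nonempty fun p : X × X => min (W p.1 (g p.1 p.2)) (W p.2 (g p.1 p.2)),
    (lt_inf'_iff _).mpr fun p _ => lt_min (hg₁ _ _) (hg₂ _ _), fun x x' => ⟨g x x', ?_, ?_⟩⟩
  · exact (inf'_le _ (mem_univ (x, x'))).trans (min_le_left _ _)
  · exact (inf'_le _ (mem_univ (x, x'))).trans (min_le_right _ _)

variable {X Y : Type} [Fintype X] [Fintype Y] {W : X → Y → ℝ} {M n L : ℕ}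

namespace FBCode

lemma exists_pow_le_outProb_and_pow_le_outProb [Nonempty Y] {δ : ℝ} (hδ0 : 0 ≤ δ)
    (hδ : ∀ x x' : X, ∃ y, δ ≤ W x y ∧ δ ≤ W x' y) (c : FBCode X Y M n L) (m₁ m₂ : Fin M) :
    ∃ y, δ ^ n ≤ c.outProb W m₁ y ∧ δ ^ n ≤ c.outProb W m₂ y := by
  classical
  choose g hg using hδ
  -- a greedy output sequence: at each step a letter both inputs produce with probability `≥ δ`
  let G (t : Fin n) (h : Fin t.1 → Y) (v : Y) : ℝ :=
    if v = g (c.enc m₁ t h) (c.enc m₂ t h) then 1 else 0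
  have hG := (isCausal_comp_prefix G).sum_prod_eq_one fun t y => by simp [G]
  obtain ⟨y, -, hy⟩ := exists_ne_zero_of_sum_ne_zero (hG.trans_ne one_ne_zero)
  have hyt (t : Fin n) := of_not_not fun h => hy (prod_eq_zero (mem_univ t) (if_neg h))
  have hpow (m : Fin M) (hm : ∀ t, δ ≤ W (c.enc m t fun i => y ⟨i.1, i.2.trans t.2⟩) (y t)) :
      δ ^ n ≤ c.outProb W m y := by
    simpa [outProb] using prod_le_prod (fun _ _ => hδ0) fun t (_ : t ∈ univ) => hm t
  exact ⟨y, hpow m₁ fun t => hyt t ▸ (hg _ _).1, hpow m₂ fun t => hyt t ▸ (hg _ _).2⟩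

lemma pow_div_le_Pera [Nonempty Y] (hW0 : ∀ x y, 0 ≤ W x y) {δ : ℝ} (hδ0 : 0 < δ)
    (hδ : ∀ x x' : X, ∃ y, δ ≤ W x y ∧ δ ≤ W x' y) {c : FBCode X Y M n 1} (hc : c.Perr W = 0)
    (hM : 2 ≤ M) : δ ^ n / M ≤ c.Pera W := by
  let m₁ : Fin M := ⟨0, by omega⟩
  let m₂ : Fin M := ⟨1, hM⟩
  obtain ⟨y, h₁, h₂⟩ := c.exists_pow_le_outProb_and_pow_le_outProb hδ0.le hδ m₁ m₂
  have hpos : 0 < δ ^ n := by positivity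
  have hnone := dec_none_eq_one_of_Perr_eq_zero hW0 hc (by simp [m₁, m₂, Fin.ext_iff])
    (hpos.trans_le h₁) (hpos.trans_le h₂)
  have hterm (m : Fin M) (y : Fin n → Y) : 0 ≤ c.outProb W m y * c.dec y none :=
    mul_nonneg (c.outProb_nonneg hW0 m y) (c.dec_nonneg y none)
  calc δ ^ n / M ≤ (M : ℝ)⁻¹ * (c.outProb W m₁ y * c.dec y none) := by
        rw [hnone, mul_one, div_eq_inv_mul]
        gcongr
    _ ≤ c.Pera W := mul_le_mul_of_nonneg_left
        ((single_le_sum (fun y _ => hterm m₁ y) (mem_univ y)).trans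
          (single_le_sum (fun m _ => sum_nonneg fun y _ => hterm m y) (mem_univ m₁)))
        (by positivity)

lemma Pera_pos_of_Perr_eq_zero [Nonempty Y] (hW0 : ∀ x y, 0 ≤ W x y) {δ : ℝ} (hδ0 : 0 < δ)
    (hδ : ∀ x x' : X, ∃ y, δ ≤ W x y ∧ δ ≤ W x' y) {c : FBCode X Y M n 1} (hc : c.Perr W = 0)
    (hM : 2 ≤ M) : 0 < c.Pera W :=
  (div_pos (pow_pos hδ0 n) (by exact_mod_cast (by omega : 0 < M))).trans_le
    (pow_div_le_Pera hW0 hδ0 hδ hc hM)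

noncomputable def alwaysErase [Nonempty X] (M n L : ℕ) : FBCode X Y M n L where
  enc _ _ _ := Classical.arbitrary X
  dec _ o := if o = none then 1 else 0
  dec_nonneg _ _ := by split_ifs <;> norm_num
  dec_sum _ := by simp
  dec_size _ _ h := by simp at h

lemma Perr_alwaysErase [Nonempty X] : (alwaysErase M n L : FBCode X Y M n L).Perr W = 0 := by
  simp [Perr, alwaysErase]

lemma Pera_alwaysErase [Nonempty X] [Nonempty Y] (hW1 : ∀ x, ∑ y, W x y = 1) (hM : M ≠ 0) :
    (alwaysErase M n L : FBCode X Y M n L).Pera W = 1 := by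
  simp [Pera, alwaysErase, sum_outProb hW1, hM]

end FBCode

lemma bddBelow_Pera_of_Perr_eq_zero (hW0 : ∀ x y, 0 ≤ W x y) :
    BddBelow {r | ∃ c : FBCode X Y M n L, c.Perr W = 0 ∧ c.Pera W = r} :=
  ⟨0, by rintro _ ⟨c, -, rfl⟩; exact c.Pera_nonneg hW0⟩

lemma PeraMin_le_Pera (hW0 : ∀ x y, 0 ≤ W x y) {c : FBCode X Y M n L} (hc : c.Perr W = 0) :
    PeraMin W M n L ≤ c.Pera W :=
  csInf_le (bddBelow_Pera_of_Perr_eq_zero hW0) ⟨c, hc, rfl⟩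

lemma PeraMin_le_one [Nonempty X] [Nonempty Y] (hW0 : ∀ x y, 0 ≤ W x y)
    (hW1 : ∀ x, ∑ y, W x y = 1) (hM : M ≠ 0) : PeraMin W M n L ≤ 1 :=
  (PeraMin_le_Pera hW0 Perr_alwaysErase).trans_eq (Pera_alwaysErase hW1 hM)

lemma exists_Pera_lt_of_PeraMin_lt [Nonempty X] [Nonempty Y] (hW0 : ∀ x y, 0 ≤ W x y)
    (hW1 : ∀ x, ∑ y, W x y = 1) (hM : M ≠ 0) {a : ℝ} (ha : PeraMin W M n L < a) :
    ∃ c : FBCode X Y M n L, c.Perr W = 0 ∧ c.Pera W < a := by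
  obtain ⟨_, ⟨c, hc, rfl⟩, hlt⟩ := (csInf_lt_iff (bddBelow_Pera_of_Perr_eq_zero hW0)
    ⟨1, alwaysErase M n L, Perr_alwaysErase, Pera_alwaysErase hW1 hM⟩).mp ha
  exact ⟨c, hc, hlt⟩

lemma pow_div_le_PeraMin [Nonempty X] [Nonempty Y] (hW0 : ∀ x y, 0 ≤ W x y)
    (hW1 : ∀ x, ∑ y, W x y = 1) {δ : ℝ} (hδ0 : 0 < δ)
    (hδ : ∀ x x' : X, ∃ y, δ ≤ W x y ∧ δ ≤ W x' y) (hM : 2 ≤ M) :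
    δ ^ n / M ≤ PeraMin W M n 1 :=
  le_csInf ⟨1, alwaysErase M n 1, Perr_alwaysErase, Pera_alwaysErase hW1 (by omega)⟩ <| by
    rintro _ ⟨c, hc, rfl⟩
    exact pow_div_le_Pera hW0 hδ0 hδ hc hM

end ErasureLowerBound

lemma exists_ne_card_mul_add_le_two_mul_sum {ι : Type*} [Fintype ι] (f : ι → ℝ)
    (h : 2 ≤ Fintype.card ι) :
    ∃ i j, i ≠ j ∧ Fintype.card ι * (f i + f j) ≤ 2 * ∑ k, f k := by
  classical
  have hne : (univ : Finset ι).Nonempty := card_pos.mp (by rw [card_univ]; omega)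
  obtain ⟨i, -, hi⟩ := exists_min_image univ f hne
  obtain ⟨j, hj, hj'⟩ := exists_min_image (univ.erase i) f <| card_pos.mp <| by
    rw [card_erase_of_mem (mem_univ i), card_univ]
    omega
  refine ⟨i, j, (ne_of_mem_erase hj).symm, ?_⟩
  have hsum : ∑ k, f k = f i + (f j + ∑ k ∈ (univ.erase i).erase j, f k) := by
    rw [add_sum_erase _ _ hj, add_sum_erase _ _ (mem_univ i)]
  have hrest : ((Fintype.card ι - 2 : ℕ) : ℝ) * f j ≤ ∑ k ∈ (univ.erase i).erase j, f k := by
    have := card_nsmul_le_sum ((univ.erase i).erase j) f (f j) fun k hk =>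
      hj' k (mem_of_mem_erase hk)
    rwa [nsmul_eq_mul, card_erase_of_mem hj, card_erase_of_mem (mem_univ _), card_univ,
      Nat.sub_sub] at this
  push_cast [Nat.cast_sub h] at hrest
  have h2 : (2 : ℝ) ≤ Fintype.card ι := by exact_mod_cast h
  nlinarith [mul_nonneg (sub_nonneg.mpr h2) (sub_nonneg.mpr (hi j (mem_univ j)))]

namespace FBCode

variable {X Y : Type} [Fintype X] [Fintype Y] {W : X → Y → ℝ} {M M' n L : ℕ}

noncomputable def restrict (c : FBCode X Y M n L) (e : Fin M' ↪ Fin M) : FBCode X Y M' n L where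
  enc b := c.enc (e b)
  dec y o := ∑ o' ∈ univ.filter (fun o' => o'.map (·.preimage e e.injective.injOn) = o),
    c.dec y o'
  dec_nonneg _ _ := sum_nonneg fun _ _ => c.dec_nonneg _ _
  dec_sum y := by
    rw [sum_fiberwise univ (Option.map (·.preimage e e.injective.injOn)) (c.dec y)]
    exact c.dec_sum y
  dec_size y S h := by
    obtain ⟨o', ho', hne⟩ := exists_ne_zero_of_sum_ne_zero h
    obtain ⟨T, rfl, rfl⟩ : ∃ T, o' = some T ∧ T.preimage e e.injective.injOn = S := by
      simpa using ho'
    exact (card_le_card_of_injOn e (fun _ ha => mem_preimage.mp ha) e.injective.injOn).trans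
      (c.dec_size y T hne)

lemma Pera_restrict (c : FBCode X Y M n L) (e : Fin M' ↪ Fin M) :
    (c.restrict e).Pera W = (M' : ℝ)⁻¹ * ∑ b, ∑ y, c.outProb W (e b) y * c.dec y none := by
  simp [Pera, restrict, outProb, sum_filter]

lemma Perr_restrict_eq_zero (hW0 : ∀ x y, 0 ≤ W x y) {c : FBCode X Y M n L} (hc : c.Perr W = 0)
    (e : Fin M' ↪ Fin M) : (c.restrict e).Perr W = 0 := by
  refine ((c.restrict e).Perr_eq_zero_iff hW0).mpr fun b y S hy hb => ?_
  simp only [restrict]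
  refine sum_eq_zero fun o' ho' => ?_
  obtain ⟨T, rfl, rfl⟩ : ∃ T, o' = some T ∧ T.preimage e e.injective.injOn = S := by
    simpa using ho'
  exact (c.Perr_eq_zero_iff hW0).mp hc (e b) y T hy fun h => hb (mem_preimage.mpr h)

end FBCode

lemma PeraMin_two_le_Pera {X Y : Type} [Fintype X] [Fintype Y] {W : X → Y → ℝ} {M n L : ℕ}
    (hW0 : ∀ x y, 0 ≤ W x y) {c : FBCode X Y M n L} (hc : c.Perr W = 0) (hM : 2 ≤ M) :
    PeraMin W 2 n L ≤ c.Pera W := by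
  obtain ⟨i, j, hij, hle⟩ := exists_ne_card_mul_add_le_two_mul_sum
    (fun m => ∑ y, c.outProb W m y * c.dec y none) (by simpa using hM)
  let e : Fin 2 ↪ Fin M := ⟨![i, j], by
    intro a b hab
    fin_cases a <;> fin_cases b <;> simp_all [eq_comm]⟩
  have hMpos : (0 : ℝ) < M := by positivity
  calc PeraMin W 2 n L ≤ (c.restrict e).Pera W :=
        PeraMin_le_Pera hW0 (Perr_restrict_eq_zero hW0 hc e)
    _ ≤ c.Pera W := by
      rw [Pera_restrict, Pera, ← div_eq_inv_mul, ← div_eq_inv_mul, Nat.cast_two,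
        div_le_div_iff₀ two_pos hMpos]
      simp only [Fintype.card_fin] at hle
      rw [mul_comm _ (M : ℝ), mul_comm _ (2 : ℝ)]
      simpa [Fin.sum_univ_two, show e 0 = i from rfl, show e 1 = j from rfl] using hle

section CountBefore

variable {k : ℕ} (P : Fin k → Prop) [DecidablePred P]

def countBefore (s : ℕ) : ℕ := #(univ.filter fun j : Fin k => j.1 < s ∧ P j)

variable {P}

lemma countBefore_congr {Q : Fin k → Prop} [DecidablePred Q] {s : ℕ}
    (h : ∀ j : Fin k, j.1 < s → (P j ↔ Q j)) : countBefore P s = countBefore Q s := by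
  unfold countBefore
  congr 1
  exact filter_congr fun j _ => ⟨fun hj => ⟨hj.1, (h j hj.1).mp hj.2⟩,
    fun hj => ⟨hj.1, (h j hj.1).mpr hj.2⟩⟩

lemma countBefore_of_le {s : ℕ} (hs : k ≤ s) : countBefore P s = #(univ.filter P) := by
  unfold countBefore
  congr 1
  exact filter_congr fun j _ => and_iff_right (j.2.trans_le hs)

lemma exists_countBefore_eq {i s : ℕ} (h : i < countBefore P s) :
    ∃ j : Fin k, P j ∧ countBefore P j = i := by
  induction s with
  | zero => unfold countBefore at h; simp at h
  | succ s ih =>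
    by_cases hi : i < countBefore P s
    · exact ih hi
    have hsub : univ.filter (fun j : Fin k => j.1 < s ∧ P j) ⊆
        univ.filter fun j : Fin k => j.1 < s + 1 ∧ P j :=
      monotone_filter_right _ fun j _ hj => ⟨hj.1.trans (Nat.lt_succ_self s), hj.2⟩
    let D := (univ.filter fun j : Fin k => j.1 < s + 1 ∧ P j) \
      univ.filter fun j : Fin k => j.1 < s ∧ P j
    have hD (a : Fin k) (ha : a ∈ D) : a.1 = s ∧ P a := by
      simp only [D, Finset.mem_sdiff, mem_filter, mem_univ, true_and, not_and] at ha
      have h₁ := ha.1.1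
      have h₂ := not_lt.mp fun h => ha.2 h ha.1.2
      exact ⟨by omega, ha.1.2⟩
    have hdiff : #D ≤ 1 := card_le_one.mpr fun a ha b hb =>
      Fin.ext ((hD a ha).1.trans (hD b hb).1.symm)
    have hcount : countBefore P (s + 1) = countBefore P s + #D :=
      (card_sdiff_add_card_eq_card hsub).symm.trans (add_comm _ _)
    obtain ⟨j, hj⟩ : D.Nonempty := card_pos.mp (by omega)
    obtain ⟨hjs, hPj⟩ := hD j hj
    exact ⟨j, hPj, by rw [hjs]; omega⟩

end CountBefore

namespace FBCode

variable {Y : Type}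

noncomputable def bitOf {r : ℕ} (m : Fin (2 ^ r)) (i : ℕ) : Fin 2 :=
  if hi : i < r then finFunctionFinEquiv.symm m ⟨i, hi⟩ else 0

/-- Time `u + ℓ * s` is letter `u` of slot `s`; the last `n % ℓ` times are idle. -/
def slotTimeEquiv (n ℓ : ℕ) : (Fin (n / ℓ) × Fin ℓ) ⊕ Fin (n % ℓ) ≃ Fin n :=
  (Equiv.sumCongr finProdFinEquiv (Equiv.refl _)).trans
    (finSumFinEquiv.trans (finCongr (Nat.div_add_mod' n ℓ)))

lemma slotTimeEquiv_inl_val {n ℓ : ℕ} (s : Fin (n / ℓ)) (u : Fin ℓ) :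
    (slotTimeEquiv n ℓ (.inl (s, u))).1 = u + ℓ * s := rfl

def slotOutputs {n ℓ : ℕ} (y : Fin n → Y) (s : Fin (n / ℓ)) (u : Fin ℓ) : Y :=
  y (slotTimeEquiv n ℓ (.inl (s, u)))

noncomputable def pastSlots [Nonempty Y] (n ℓ : ℕ) {t : ℕ} (h : Fin t → Y) (s : Fin (n / ℓ))
    (u : Fin ℓ) : Y :=
  if hlt : (slotTimeEquiv n ℓ (.inl (s, u))).1 < t then h ⟨_, hlt⟩ else Classical.arbitrary Y

def outputSplitEquiv (n ℓ : ℕ) :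
    ((Fin (n / ℓ) → Fin ℓ → Y) × (Fin (n % ℓ) → Y)) ≃ (Fin n → Y) :=
  ((Equiv.curry _ _ _).symm.prodCongr (Equiv.refl _)).trans
    ((Equiv.sumArrowEquivProdArrow _ _ _).symm.trans
      ((slotTimeEquiv n ℓ).arrowCongr (Equiv.refl Y)))

lemma slotOutputs_outputSplitEquiv (z : Fin (n / ℓ) → Fin ℓ → Y) (w : Fin (n % ℓ) → Y) :
    slotOutputs (outputSplitEquiv n ℓ (z, w)) = z := by
  funext s u
  simp [slotOutputs, outputSplitEquiv]

lemma outputSplitEquiv_inr (z : Fin (n / ℓ) → Fin ℓ → Y) (w : Fin (n % ℓ) → Y)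
    (v : Fin (n % ℓ)) : outputSplitEquiv n ℓ (z, w) (slotTimeEquiv n ℓ (.inr v)) = w v := by
  simp [outputSplitEquiv]

end FBCode

namespace FBCode

variable {X Y : Type} [Fintype X] [Fintype Y] {W : X → Y → ℝ}

section TwoMessages

variable (W) {ℓ : ℕ} (c : FBCode X Y 2 ℓ 1)

def IsAmbiguous (z : Fin ℓ → Y) : Prop :=
  0 < c.outProb W 0 z ∧ 0 < c.outProb W 1 z

noncomputable def guess (z : Fin ℓ → Y) : Fin 2 :=
  if 0 < c.outProb W 0 z then 0 else 1

variable {W c}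

lemma guess_eq {b : Fin 2} {z : Fin ℓ → Y} (hb : 0 < c.outProb W b z)
    (hz : ¬ c.IsAmbiguous W z) : c.guess W z = b := by
  match b, hb with
  | 0, hb => simp [guess, hb]
  | 1, hb =>
    simp only [IsAmbiguous, not_and'] at hz
    simp [guess, hz hb]

open scoped Classical in
lemma sum_outProb_ambiguous_le (hW0 : ∀ x y, 0 ≤ W x y) (hc : c.Perr W = 0) (b : Fin 2) :
    ∑ z ∈ univ.filter (c.IsAmbiguous W), c.outProb W b z ≤ 2 * c.Pera W := by
  have hterm (b : Fin 2) (z : Fin ℓ → Y) : 0 ≤ c.outProb W b z * c.dec z none :=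
    mul_nonneg (c.outProb_nonneg hW0 b z) (c.dec_nonneg z none)
  calc ∑ z ∈ univ.filter (c.IsAmbiguous W), c.outProb W b z
      = ∑ z ∈ univ.filter (c.IsAmbiguous W), c.outProb W b z * c.dec z none :=
        sum_congr rfl fun z hz => by
          obtain ⟨h₀, h₁⟩ := (mem_filter.mp hz).2
          rw [dec_none_eq_one_of_Perr_eq_zero hW0 hc zero_ne_one h₀ h₁, mul_one]
    _ ≤ ∑ z, c.outProb W b z * c.dec z none :=
        sum_le_sum_of_subset_of_nonneg (filter_subset _ _) fun z _ _ => hterm b z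
    _ ≤ ∑ b', ∑ z, c.outProb W b' z * c.dec z none :=
        single_le_sum (fun b' _ => sum_nonneg fun z _ => hterm b' z) (mem_univ b)
    _ = 2 * c.Pera W := by simp [Pera]

end TwoMessages

section RepetitionCode

open scoped Classical

variable (W) {ℓ : ℕ} (c : FBCode X Y 2 ℓ 1)

noncomputable def resolvedCount {k : ℕ} (z : Fin k → Fin ℓ → Y) : ℕ → ℕ :=
  countBefore fun j => ¬ c.IsAmbiguous W (z j)

noncomputable def decodedBit {k : ℕ} (z : Fin k → Fin ℓ → Y) (i : ℕ) : Fin 2 :=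
  if h : ∃ s, ¬ c.IsAmbiguous W (z s) ∧ c.resolvedCount W z s = i then c.guess W (z h.choose)
  else 0

noncomputable def repetitionDecision (n r : ℕ) (y : Fin n → Y) : Option (Finset (Fin (2 ^ r))) :=
  if r ≤ c.resolvedCount W (slotOutputs y) (n / ℓ) then
    some {finFunctionFinEquiv fun i : Fin r => c.decodedBit W (slotOutputs y) i}
  else none

variable {W c} in
lemma isCausal_resolvedCount {r k : ℕ} (m : Fin (2 ^ r)) :
    IsCausal fun (s : Fin k) (z : Fin k → Fin ℓ → Y) =>
      c.outProb W (bitOf m (c.resolvedCount W z s)) := fun s z₁ z₂ h => by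
  have : c.resolvedCount W z₁ s = c.resolvedCount W z₂ s :=
    countBefore_congr fun j hj => by rw [h j hj]
  simp only [this]

variable [Nonempty X] [Nonempty Y]

/-- Slot `s` carries bit number `resolvedCount s` of the message: each bit is repeated until a
slot carrying it comes out unambiguous. -/
noncomputable def repetitionCode (n r : ℕ) : FBCode X Y (2 ^ r) n 1 where
  enc m t h := Sum.elim
    (fun p : Fin (n / ℓ) × Fin ℓ => c.enc (bitOf m (c.resolvedCount W (pastSlots n ℓ h) p.1)) p.2
      fun i => pastSlots n ℓ h p.1 (Fin.castLT i (i.2.trans p.2.2)))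
    (fun _ => Classical.arbitrary X) ((slotTimeEquiv n ℓ).symm t)
  dec y o := if o = c.repetitionDecision W n r y then 1 else 0
  dec_nonneg _ _ := by split_ifs <;> norm_num
  dec_sum y := by simp
  dec_size y S h := by
    have hS : some S = c.repetitionDecision W n r y := of_not_not fun hS => h (if_neg hS)
    unfold repetitionDecision at hS
    split_ifs at hS
    simp [Option.some_injective _ hS]

variable {W c} {n r : ℕ}

lemma outProb_repetitionCode (m : Fin (2 ^ r)) (y : Fin n → Y) :
    (c.repetitionCode W n r).outProb W m y =
      (∏ s : Fin (n / ℓ), c.outProb W (bitOf m (c.resolvedCount W (slotOutputs y) s))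
        (slotOutputs y s)) *
        ∏ w, W (Classical.arbitrary X) (y (slotTimeEquiv n ℓ (.inr w))) := by
  rw [outProb, ← (slotTimeEquiv n ℓ).prod_comp, Fintype.prod_sum_type, Fintype.prod_prod_type]
  congr 1
  · refine prod_congr rfl fun s _ => prod_congr rfl fun u _ => ?_
    simp only [repetitionCode, Equiv.symm_apply_apply, Sum.elim_inl]
    set t := slotTimeEquiv n ℓ (.inl (s, u))
    have hpast (j : Fin (n / ℓ)) (v : Fin ℓ) (hj : j.1 < s.1 ∨ j = s ∧ v.1 < u.1) :
        pastSlots n ℓ (fun i : Fin t.1 => y ⟨i.1, i.2.trans t.2⟩) j v = slotOutputs y j v := by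
      refine dif_pos ?_
      simp only [t, slotTimeEquiv_inl_val]
      rcases hj with hj | ⟨rfl, hv⟩
      · nlinarith [v.2, Nat.mul_le_mul_left ℓ (Nat.succ_le_of_lt hj)]
      · omega
    have hcount : c.resolvedCount W (pastSlots n ℓ fun i : Fin t.1 => y ⟨i.1, i.2.trans t.2⟩) s =
        c.resolvedCount W (slotOutputs y) s :=
      countBefore_congr fun j hj => by rw [funext fun v => hpast j v (.inl hj)]
    rw [hcount]
    congr 2
    exact funext fun i => hpast s _ (.inr ⟨rfl, i.2⟩)
  · refine prod_congr rfl fun w _ => ?_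
    simp [repetitionCode]

lemma repetitionDecision_eq_some (hW0 : ∀ x y, 0 ≤ W x y) {m : Fin (2 ^ r)} {y : Fin n → Y}
    (hy : 0 < (c.repetitionCode W n r).outProb W m y)
    (hr : r ≤ c.resolvedCount W (slotOutputs y) (n / ℓ)) :
    c.repetitionDecision W n r y = some {m} := by
  have hslot (s : Fin (n / ℓ)) :
      0 < c.outProb W (bitOf m (c.resolvedCount W (slotOutputs y) s)) (slotOutputs y s) := by
    refine (c.outProb_nonneg hW0 _ _).lt_of_ne fun h => hy.ne' ?_
    rw [outProb_repetitionCode, prod_eq_zero (mem_univ s) h.symm, zero_mul]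
  rw [repetitionDecision, if_pos hr, Option.some_inj, singleton_inj,
    ← Equiv.eq_symm_apply finFunctionFinEquiv]
  funext i
  have hex : ∃ s, ¬ c.IsAmbiguous W (slotOutputs y s) ∧
      c.resolvedCount W (slotOutputs y) s = i :=
    exists_countBefore_eq (i.2.trans_le hr)
  rw [decodedBit, dif_pos hex]
  obtain ⟨hamb, hcount⟩ := hex.choose_spec
  refine guess_eq ?_ hamb
  simpa [hcount, bitOf] using hslot hex.choose

lemma Perr_repetitionCode (hW0 : ∀ x y, 0 ≤ W x y) : (c.repetitionCode W n r).Perr W = 0 := by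
  refine ((c.repetitionCode W n r).Perr_eq_zero_iff hW0).mpr fun m y S hy hm => if_neg ?_
  intro hS
  by_cases hr : r ≤ c.resolvedCount W (slotOutputs y) (n / ℓ)
  · rw [repetitionDecision_eq_some hW0 hy hr, Option.some_inj] at hS
    exact hm (hS ▸ mem_singleton_self m)
  · simp [repetitionDecision, hr] at hS

lemma sum_outProb_dec_none_repetitionCode_le (hW0 : ∀ x y, 0 ≤ W x y)
    (hW1 : ∀ x, ∑ y, W x y = 1) (hc : c.Perr W = 0) (hr : r ≤ n / ℓ) (m : Fin (2 ^ r)) :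
    ∑ y, (c.repetitionCode W n r).outProb W m y * (c.repetitionCode W n r).dec y none ≤
      (n / ℓ).choose (n / ℓ - r + 1) * (2 * c.Pera W) ^ (n / ℓ - r + 1) := by
  let Q (s : Fin (n / ℓ)) (z : Fin (n / ℓ) → Fin ℓ → Y) :=
    c.outProb W (bitOf m (c.resolvedCount W z s))
  have hidle : ∑ w : Fin (n % ℓ) → Y, ∏ v, W (Classical.arbitrary X) (w v) = 1 :=
    IsCausal.sum_prod_eq_one (Q := fun _ _ => W (Classical.arbitrary X)) (fun _ _ _ _ => rfl)
      fun _ _ => hW1 _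
  have hdec (y : Fin n → Y) : (c.repetitionCode W n r).dec y none =
      if c.resolvedCount W (slotOutputs y) (n / ℓ) < r then 1 else 0 := by
    simp [repetitionCode, repetitionDecision, eq_comm (a := none)]
  calc ∑ y, (c.repetitionCode W n r).outProb W m y * (c.repetitionCode W n r).dec y none
      = ∑ z ∈ univ.filter (fun z => c.resolvedCount W z (n / ℓ) < r), ∏ s, Q s z (z s) := by
        rw [← (outputSplitEquiv n ℓ).sum_comp, Fintype.sum_prod_type, sum_filter]
        refine sum_congr rfl fun z _ => ?_
        simp only [hdec, outProb_repetitionCode, slotOutputs_outputSplitEquiv,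
          outputSplitEquiv_inr, mul_ite, mul_one, mul_zero]
        split_ifs <;> simp [← mul_sum, hidle, Q]
    _ ≤ ∑ z ∈ univ.filter (fun z : Fin (n / ℓ) → Fin ℓ → Y =>
          n / ℓ - r + 1 ≤ #(univ.filter fun s => c.IsAmbiguous W (z s))), ∏ s, Q s z (z s) := by
        refine sum_le_sum_of_subset_of_nonneg (monotone_filter_right _ fun z _ hz => ?_)
          fun z _ _ => prod_nonneg fun s _ => c.outProb_nonneg hW0 _ _
        have := card_filter_add_card_filter_not (s := univ) fun s => c.IsAmbiguous W (z s)
        rw [resolvedCount, countBefore_of_le le_rfl] at hz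
        simp only [card_univ, Fintype.card_fin] at this
        omega
    _ ≤ (n / ℓ).choose (n / ℓ - r + 1) * (2 * c.Pera W) ^ (n / ℓ - r + 1) :=
        (isCausal_resolvedCount m).sum_prod_filter_le_choose_mul_pow
          (fun _ _ _ => c.outProb_nonneg hW0 _ _) (fun _ _ => c.sum_outProb hW1 _) _
          (by linarith [c.Pera_nonneg hW0]) (fun _ _ => sum_outProb_ambiguous_le hW0 hc _) _

lemma Pera_repetitionCode_le (hW0 : ∀ x y, 0 ≤ W x y) (hW1 : ∀ x, ∑ y, W x y = 1)
    (hc : c.Perr W = 0) (hr : r ≤ n / ℓ) :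
    (c.repetitionCode W n r).Pera W ≤
      (n / ℓ).choose (n / ℓ - r + 1) * (2 * c.Pera W) ^ (n / ℓ - r + 1) := by
  calc (c.repetitionCode W n r).Pera W
      ≤ ((2 ^ r : ℕ) : ℝ)⁻¹ * ∑ _m : Fin (2 ^ r),
          (n / ℓ).choose (n / ℓ - r + 1) * (2 * c.Pera W) ^ (n / ℓ - r + 1) :=
        mul_le_mul_of_nonneg_left
          (sum_le_sum fun m _ => sum_outProb_dec_none_repetitionCode_le hW0 hW1 hc hr m)
          (by positivity)
    _ = _ := by simp

end RepetitionCode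

end FBCode

section Asymptotics

lemma tendsto_natCast_div_div_atTop {ℓ : ℕ} (hℓ : 0 < ℓ) :
    Tendsto (fun n : ℕ => ((n / ℓ : ℕ) : ℝ) / n) atTop (nhds (1 / ℓ)) := by
  have hℓ' : (0 : ℝ) < ℓ := Nat.cast_pos.mpr hℓ
  have h := (tendsto_nat_floor_div_atTop (R := ℝ)).comp
    (tendsto_natCast_atTop_atTop.atTop_div_const hℓ')
  refine (h.div_const (ℓ : ℝ)).congr fun n => ?_
  simp [Nat.floor_div_eq_div, div_div, div_mul_cancel₀ _ hℓ'.ne']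

lemma tendsto_nat_sqrt_atTop : Tendsto Nat.sqrt atTop atTop :=
  tendsto_atTop_atTop.mpr fun b => ⟨b * b, fun _ hn => Nat.le_sqrt.mpr hn⟩

lemma tendsto_nat_sqrt_div_atTop : Tendsto (fun n : ℕ => (n.sqrt : ℝ) / n) atTop (nhds 0) := by
  refine squeeze_zero' (Eventually.of_forall fun n => by positivity)
    ((eventually_ge_atTop 1).mono fun n hn => ?_)
    (tendsto_inv_atTop_zero.comp (tendsto_natCast_atTop_atTop.comp tendsto_nat_sqrt_atTop))
  have hs : (0 : ℝ) < n.sqrt := Nat.cast_pos.mpr (Nat.sqrt_pos.mpr hn)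
  have hsq : (n.sqrt : ℝ) ^ 2 ≤ n := by exact_mod_cast Nat.sqrt_le' n
  rw [Function.comp_apply, Function.comp_apply, div_le_iff₀ (by positivity)]
  field_simp
  nlinarith

lemma tendsto_two_pow_nat_sqrt_atTop :
    Tendsto (fun n : ℕ => ((2 ^ n.sqrt : ℕ) : ℝ)) atTop atTop :=
  tendsto_natCast_atTop_atTop.comp
    (tendsto_atTop_mono (fun _ => Nat.lt_two_pow_self.le) tendsto_nat_sqrt_atTop)

lemma tendsto_log_two_pow_nat_sqrt_div_atTop :
    Tendsto (fun n : ℕ => Real.log ((2 ^ n.sqrt : ℕ) : ℝ) / n) atTop (nhds 0) := by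
  simpa [Real.log_pow, mul_div_right_comm] using
    tendsto_nat_sqrt_div_atTop.mul_const (Real.log 2)

lemma tendsto_zero_of_le_neg_log_div {P L : ℕ → ℝ} {a : ℝ} (ha : 0 < a)
    (hL : Tendsto L atTop (nhds a)) (hP : ∀ᶠ n in atTop, 0 < P n)
    (hLP : ∀ᶠ n in atTop, L n ≤ -Real.log (P n) / n) : Tendsto P atTop (nhds 0) := by
  have hexp : Tendsto (fun n : ℕ => Real.exp (-(a / 2) * n)) atTop (nhds 0) :=
    Real.tendsto_exp_atBot.comp
      ((tendsto_natCast_atTop_atTop).const_mul_atTop_of_neg (by linarith))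
  refine squeeze_zero' (hP.mono fun n hn => hn.le) ?_ hexp
  filter_upwards [hP, hLP, hL.eventually (lt_mem_nhds (half_lt_self ha)),
    eventually_ge_atTop 1] with n hPn hLn hlt hn
  have hn' : (0 : ℝ) < n := Nat.cast_pos.mpr hn
  rw [← Real.exp_log hPn, Real.exp_le_exp]
  have := (hlt.trans_le hLn)
  rw [lt_div_iff₀ hn'] at this
  linarith

end Asymptotics

section Exponents

variable {X Y : Type} [Fintype X] [Fintype Y] {W : X → Y → ℝ}

open FBCode

def zeroRateExponents (W : X → Y → ℝ) : Set ℝ :=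
  {v : ℝ | ∃ M : ℕ → ℕ, ∃ c : (n : ℕ) → FBCode X Y (M n) n 1,
    Tendsto (fun n => (M n : ℝ)) atTop atTop ∧
    Tendsto (fun n => Real.log (M n) / n) atTop (nhds 0) ∧
    (∀ n, FBCode.Perr W (c n) = 0) ∧
    Tendsto (fun n => FBCode.Pera W (c n)) atTop (nhds 0) ∧
    v = Filter.liminf (fun n => -Real.log (FBCode.Pera W (c n)) / n) atTop}

lemma eventually_two_le_of_tendsto {M : ℕ → ℕ} (hM : Tendsto (fun n => (M n : ℝ)) atTop atTop) :
    ∀ᶠ n in atTop, 2 ≤ M n :=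
  (hM.eventually_ge_atTop 2).mono fun _ h => by exact_mod_cast h

lemma neg_log_Pera_div_nonneg [Nonempty Y] (hW0 : ∀ x y, 0 ≤ W x y)
    (hW1 : ∀ x, ∑ y, W x y = 1) {M n L : ℕ} (c : FBCode X Y M n L) :
    0 ≤ -Real.log (c.Pera W) / n :=
  div_nonneg (neg_nonneg.mpr (Real.log_nonpos (c.Pera_nonneg hW0) (c.Pera_le_one hW0 hW1)))
    n.cast_nonneg

lemma isBoundedUnder_le_neg_log_Pera_div [Nonempty Y] (hW0 : ∀ x y, 0 ≤ W x y) {δ : ℝ}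
    (hδ0 : 0 < δ) (hδ : ∀ x x' : X, ∃ y, δ ≤ W x y ∧ δ ≤ W x' y) {M : ℕ → ℕ}
    {c : (n : ℕ) → FBCode X Y (M n) n 1} (hM : Tendsto (fun n => (M n : ℝ)) atTop atTop)
    (hrate : Tendsto (fun n => Real.log (M n) / n) atTop (nhds 0))
    (herr : ∀ n, (c n).Perr W = 0) :
    IsBoundedUnder (· ≤ ·) atTop fun n => -Real.log ((c n).Pera W) / n := by
  refine ⟨-Real.log δ + 1, eventually_map.mpr ?_⟩
  filter_upwards [eventually_two_le_of_tendsto hM, hrate.eventually (gt_mem_nhds one_pos),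
    eventually_ge_atTop 1]
    with n hMn hrn hn
  have hn' : (0 : ℝ) < n := Nat.cast_pos.mpr hn
  have hM' : (0 : ℝ) < M n := by positivity
  have hlog := Real.log_le_log (by positivity) (pow_div_le_Pera hW0 hδ0 hδ (herr n) hMn)
  rw [Real.log_div (by positivity) hM'.ne', Real.log_pow] at hlog
  rw [div_lt_one hn'] at hrn
  rw [div_le_iff₀ hn']
  nlinarith

lemma PeraMin_two_pos [Nonempty X] [Nonempty Y] (hW0 : ∀ x y, 0 ≤ W x y)
    (hW1 : ∀ x, ∑ y, W x y = 1) {δ : ℝ} (hδ0 : 0 < δ)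
    (hδ : ∀ x x' : X, ∃ y, δ ≤ W x y ∧ δ ≤ W x' y) (n : ℕ) : 0 < PeraMin W 2 n 1 :=
  (by positivity : (0 : ℝ) < δ ^ n / (2 : ℕ)).trans_le (pow_div_le_PeraMin hW0 hW1 hδ0 hδ le_rfl)

lemma neg_log_PeraMin_div_nonneg [Nonempty X] [Nonempty Y] (hW0 : ∀ x y, 0 ≤ W x y)
    (hW1 : ∀ x, ∑ y, W x y = 1) (M n L : ℕ) (hM : M ≠ 0) :
    0 ≤ -Real.log (PeraMin W M n L) / n := by
  refine div_nonneg (neg_nonneg.mpr (Real.log_nonpos ?_ (PeraMin_le_one hW0 hW1 hM)))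
    n.cast_nonneg
  exact le_csInf ⟨1, alwaysErase M n L, Perr_alwaysErase, Pera_alwaysErase hW1 hM⟩
    fun _ ⟨c, _, hc⟩ => hc ▸ c.Pera_nonneg hW0

lemma isBoundedUnder_le_neg_log_PeraMin_div [Nonempty X] [Nonempty Y] (hW0 : ∀ x y, 0 ≤ W x y)
    (hW1 : ∀ x, ∑ y, W x y = 1) {δ : ℝ} (hδ0 : 0 < δ)
    (hδ : ∀ x x' : X, ∃ y, δ ≤ W x y ∧ δ ≤ W x' y) :
    IsBoundedUnder (· ≤ ·) atTop fun n => -Real.log (PeraMin W 2 n 1) / n := by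
  refine ⟨-Real.log δ + Real.log 2, eventually_map.mpr ?_⟩
  filter_upwards [eventually_ge_atTop 1] with n hn
  have hn' : (1 : ℝ) ≤ n := Nat.one_le_cast.mpr hn
  have hlog := Real.log_le_log (by positivity) (pow_div_le_PeraMin hW0 hW1 hδ0 hδ (n := n) le_rfl)
  rw [Real.log_div (by positivity) (by norm_num), Real.log_pow, Nat.cast_ofNat] at hlog
  rw [div_le_iff₀ (by positivity)]
  nlinarith [Real.log_nonneg (one_le_two : (1 : ℝ) ≤ 2)]

lemma nonneg_of_mem_zeroRateExponents [Nonempty Y] (hW0 : ∀ x y, 0 ≤ W x y)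
    (hW1 : ∀ x, ∑ y, W x y = 1) {δ : ℝ} (hδ0 : 0 < δ)
    (hδ : ∀ x x' : X, ∃ y, δ ≤ W x y ∧ δ ≤ W x' y) {v : ℝ} (hv : v ∈ zeroRateExponents W) :
    0 ≤ v := by
  obtain ⟨M, c, hM, hrate, herr, -, rfl⟩ := hv
  exact le_liminf_of_le
    (isBoundedUnder_le_neg_log_Pera_div hW0 hδ0 hδ hM hrate herr).isCoboundedUnder_ge
    (Eventually.of_forall fun n => neg_log_Pera_div_nonneg hW0 hW1 (c n))

lemma le_liminf_of_mem_zeroRateExponents [Nonempty X] [Nonempty Y] (hW0 : ∀ x y, 0 ≤ W x y)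
    (hW1 : ∀ x, ∑ y, W x y = 1) {δ : ℝ} (hδ0 : 0 < δ)
    (hδ : ∀ x x' : X, ∃ y, δ ≤ W x y ∧ δ ≤ W x' y) {v : ℝ} (hv : v ∈ zeroRateExponents W) :
    v ≤ liminf (fun n => -Real.log (PeraMin W 2 n 1) / n) atTop := by
  obtain ⟨M, c, hM, -, herr, -, rfl⟩ := hv
  refine liminf_le_liminf ?_
    (isBoundedUnder_of_eventually_ge
      (Eventually.of_forall fun n => neg_log_Pera_div_nonneg hW0 hW1 (c n)))
    (isBoundedUnder_le_neg_log_PeraMin_div hW0 hW1 hδ0 hδ).isCoboundedUnder_ge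
  filter_upwards [eventually_two_le_of_tendsto hM] with n hn
  exact div_le_div_of_nonneg_right (neg_le_neg (Real.log_le_log (PeraMin_two_pos hW0 hW1 hδ0 hδ n)
    (PeraMin_two_le_Pera hW0 (herr n) hn))) n.cast_nonneg

lemma le_neg_log_Pera_repetitionCode [Nonempty X] [Nonempty Y] (hW0 : ∀ x y, 0 ≤ W x y)
    (hW1 : ∀ x, ∑ y, W x y = 1) {δ : ℝ} (hδ0 : 0 < δ)
    (hδ : ∀ x x' : X, ∃ y, δ ≤ W x y ∧ δ ≤ W x' y) {ℓ n r : ℕ} {c : FBCode X Y 2 ℓ 1}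
    (hc : c.Perr W = 0) (hc1 : 4 * c.Pera W < 1) (hr0 : 1 ≤ r) (hr : r ≤ n / ℓ) :
    ((n / ℓ : ℕ) : ℝ) * -Real.log (4 * c.Pera W) + r * Real.log (2 * c.Pera W) ≤
      -Real.log ((c.repetitionCode W n r).Pera W) := by
  set ε := 2 * c.Pera W
  have hε : 0 < ε := mul_pos two_pos (Pera_pos_of_Perr_eq_zero hW0 hδ0 hδ hc le_rfl)
  have hpos : 0 < (c.repetitionCode W n r).Pera W :=
    Pera_pos_of_Perr_eq_zero hW0 hδ0 hδ (Perr_repetitionCode hW0)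
      (by simpa using Nat.pow_le_pow_right two_pos hr0)
  have hle : (c.repetitionCode W n r).Pera W ≤ 2 ^ (n / ℓ) * ε ^ (n / ℓ - r) :=
    (Pera_repetitionCode_le hW0 hW1 hc hr).trans <| mul_le_mul
      (by exact_mod_cast Nat.choose_le_two_pow _ _) (pow_le_pow_of_le_one hε.le (by linarith)
        (by omega)) (by positivity) (by positivity)
  have hlog := Real.log_le_log hpos hle
  rw [Real.log_mul (by positivity) (by positivity), Real.log_pow, Real.log_pow,
    Nat.cast_sub hr] at hlog
  have h4 : Real.log (4 * c.Pera W) = Real.log 2 + Real.log ε := by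
    rw [← Real.log_mul two_ne_zero hε.ne', ← mul_assoc]
    norm_num
  rw [h4]
  linarith

lemma exists_mem_zeroRateExponents_ge [Nonempty X] [Nonempty Y] (hW0 : ∀ x y, 0 ≤ W x y)
    (hW1 : ∀ x, ∑ y, W x y = 1) {δ : ℝ} (hδ0 : 0 < δ)
    (hδ : ∀ x x' : X, ∃ y, δ ≤ W x y ∧ δ ≤ W x' y) {ℓ : ℕ} (hℓ : 0 < ℓ)
    {c : FBCode X Y 2 ℓ 1} (hc : c.Perr W = 0) (hc1 : 4 * c.Pera W < 1) :
    ∃ v ∈ zeroRateExponents W, -Real.log (4 * c.Pera W) / ℓ ≤ v := by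
  let cs (n : ℕ) : FBCode X Y (2 ^ n.sqrt) n 1 := c.repetitionCode W n n.sqrt
  have hPc : 0 < c.Pera W := Pera_pos_of_Perr_eq_zero hW0 hδ0 hδ hc le_rfl
  have ha : 0 < -Real.log (4 * c.Pera W) / ℓ :=
    div_pos (neg_pos.mpr (Real.log_neg (by positivity) hc1)) (Nat.cast_pos.mpr hℓ)
  let L (n : ℕ) : ℝ := ((n / ℓ : ℕ) : ℝ) / n * -Real.log (4 * c.Pera W) +
    (n.sqrt : ℝ) / n * Real.log (2 * c.Pera W)
  have hL : Tendsto L atTop (nhds (-Real.log (4 * c.Pera W) / ℓ)) := by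
    have := ((tendsto_natCast_div_div_atTop hℓ).mul_const (-Real.log (4 * c.Pera W))).add
      (tendsto_nat_sqrt_div_atTop.mul_const (Real.log (2 * c.Pera W)))
    rwa [zero_mul, add_zero, one_div_mul_eq_div] at this
  have hLu : ∀ᶠ n in atTop, L n ≤ -Real.log ((cs n).Pera W) / n := by
    filter_upwards [eventually_ge_atTop (ℓ * ℓ), eventually_ge_atTop 1] with n hn hn1
    have hr : n.sqrt ≤ n / ℓ := (Nat.le_div_iff_mul_le hℓ).mpr
      ((Nat.mul_le_mul_left _ (Nat.le_sqrt.mpr hn)).trans (Nat.sqrt_le n))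
    have := le_neg_log_Pera_repetitionCode hW0 hW1 hδ0 hδ hc hc1 (Nat.sqrt_pos.mpr hn1) hr
    simpa only [L, div_mul_eq_mul_div, ← add_div] using
      div_le_div_of_nonneg_right this n.cast_nonneg
  have hM := tendsto_two_pow_nat_sqrt_atTop
  have hrate := tendsto_log_two_pow_nat_sqrt_div_atTop
  have herr (n : ℕ) : (cs n).Perr W = 0 := Perr_repetitionCode hW0
  have hpos : ∀ᶠ n in atTop, 0 < (cs n).Pera W :=
    (eventually_two_le_of_tendsto hM).mono fun n hn =>
      Pera_pos_of_Perr_eq_zero hW0 hδ0 hδ (herr n) hn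
  refine ⟨_, ⟨_, cs, hM, hrate, herr, tendsto_zero_of_le_neg_log_div ha hL hpos hLu, rfl⟩, ?_⟩
  exact hL.liminf_eq.symm.trans_le (liminf_le_liminf hLu hL.isBoundedUnder_ge
    (isBoundedUnder_le_neg_log_Pera_div hW0 hδ0 hδ hM hrate herr).isCoboundedUnder_ge)

lemma exists_mem_zeroRateExponents_gt [Nonempty X] [Nonempty Y] (hW0 : ∀ x y, 0 ≤ W x y)
    (hW1 : ∀ x, ∑ y, W x y = 1) {δ : ℝ} (hδ0 : 0 < δ)
    (hδ : ∀ x x' : X, ∃ y, δ ≤ W x y ∧ δ ≤ W x' y) {w : ℝ} (hw0 : 0 ≤ w)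
    (hw : w < liminf (fun n => -Real.log (PeraMin W 2 n 1) / n) atTop) :
    ∃ v ∈ zeroRateExponents W, w < v := by
  set E := liminf (fun n => -Real.log (PeraMin W 2 n 1) / n) atTop
  have hG : ∀ᶠ ℓ in atTop, (w + E) / 2 < -Real.log (PeraMin W 2 ℓ 1) / ℓ :=
    eventually_lt_of_lt_liminf (by linarith) <| isBoundedUnder_of_eventually_ge <|
      Eventually.of_forall fun n => neg_log_PeraMin_div_nonneg hW0 hW1 2 n 1 two_ne_zero
  have h8 : ∀ᶠ ℓ : ℕ in atTop, Real.log 8 / ℓ < (E - w) / 2 :=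
    (tendsto_const_div_atTop_nhds_zero_nat _).eventually (gt_mem_nhds (by linarith))
  obtain ⟨ℓ, hGℓ, h8ℓ, hℓ⟩ := (hG.and (h8.and (eventually_ge_atTop 1))).exists
  have hp := PeraMin_two_pos hW0 hW1 hδ0 hδ ℓ
  obtain ⟨c, hc, hlt⟩ := exists_Pera_lt_of_PeraMin_lt hW0 hW1 two_ne_zero
    (show PeraMin W 2 ℓ 1 < 2 * PeraMin W 2 ℓ 1 by linarith)
  have hPc : 0 < c.Pera W := hp.trans_le (PeraMin_le_Pera hW0 hc)
  have hwc : w < -Real.log (4 * c.Pera W) / ℓ :=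
    calc w < -Real.log (PeraMin W 2 ℓ 1) / ℓ - Real.log 8 / ℓ := by linarith
      _ = -Real.log (8 * PeraMin W 2 ℓ 1) / ℓ := by
        rw [Real.log_mul (by norm_num) hp.ne']
        ring
      _ ≤ -Real.log (4 * c.Pera W) / ℓ := div_le_div_of_nonneg_right
        (neg_le_neg (Real.log_le_log (by positivity) (by linarith))) ℓ.cast_nonneg
  have hc1 : 4 * c.Pera W < 1 := by
    refine (Real.log_neg_iff (by positivity)).mp (neg_pos.mp ?_)
    exact (div_pos_iff_of_pos_right (Nat.cast_pos.mpr hℓ)).mp (hw0.trans_lt hwc)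
  obtain ⟨v, hv, hle⟩ := exists_mem_zeroRateExponents_ge hW0 hW1 hδ0 hδ hℓ hc hc1
  exact ⟨v, hv, hwc.trans_le hle⟩

end Exponents

/-- for a DMC with zero zero-error capacity, the zero-rate erasure
exponent of error-free feedback block codes (the supremum, over error-free reliable
sequences with rate tending to zero and message count tending to infinity, of the
liminf erasure exponent) equals the two-message erasure exponent
`liminf (−log P_era(2,n,1))/n`. -/
theorem zero_rate_erasure_exponent_eq_two_message {X Y : Type}
    [Fintype X] [Fintype Y] [Nonempty X]
    (W : X → Y → ℝ) (hW0 : ∀ x y, 0 ≤ W x y) (hW1 : ∀ x, ∑ y, W x y = 1)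
    (hC0 : ∀ x x' : X, ∃ y, 0 < W x y ∧ 0 < W x' y) :
    sSup {v : ℝ | ∃ M : ℕ → ℕ, ∃ c : (n : ℕ) → FBCode X Y (M n) n 1,
        Tendsto (fun n => (M n : ℝ)) atTop atTop ∧
        Tendsto (fun n => Real.log (M n) / n) atTop (nhds 0) ∧
        (∀ n, FBCode.Perr W (c n) = 0) ∧
        Tendsto (fun n => FBCode.Pera W (c n)) atTop (nhds 0) ∧
        v = Filter.liminf (fun n => -Real.log (FBCode.Pera W (c n)) / n) atTop}
      = Filter.liminf
          (fun n => -Real.log (PeraMin (X := X) (Y := Y) W 2 n 1) / n) atTop := by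
  have := nonempty_of_sum_eq_one hW1
  obtain ⟨δ, hδ0, hδ⟩ := exists_pos_forall_exists_le_and_le hC0
  change sSup (zeroRateExponents W) = _
  set E := liminf (fun n => -Real.log (PeraMin W 2 n 1) / n) atTop
  have hgt {w : ℝ} (hw0 : 0 ≤ w) (hw : w < E) : ∃ v ∈ zeroRateExponents W, w < v :=
    exists_mem_zeroRateExponents_gt hW0 hW1 hδ0 hδ hw0 hw
  have hE0 : 0 ≤ E := le_liminf_of_le
    (isBoundedUnder_le_neg_log_PeraMin_div hW0 hW1 hδ0 hδ).isCoboundedUnder_ge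
    (Eventually.of_forall fun n => neg_log_PeraMin_div_nonneg hW0 hW1 2 n 1 two_ne_zero)
  rcases (zeroRateExponents W).eq_empty_or_nonempty with hS | ⟨v₀, hv₀⟩
  · have hE : E ≤ 0 := not_lt.mp fun hE => by simpa [hS] using hgt le_rfl hE
    rw [hS, Real.sSup_empty]
    exact le_antisymm hE0 hE
  refine csSup_eq_of_forall_le_of_forall_lt_exists_gt ⟨v₀, hv₀⟩
    (fun v hv => le_liminf_of_mem_zeroRateExponents hW0 hW1 hδ0 hδ hv) fun w hw => ?_
  rcases lt_or_ge w 0 with hw0 | hw0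
  · exact ⟨v₀, hv₀, hw0.trans_le (nonneg_of_mem_zeroRateExponents hW0 hW1 hδ0 hδ hv₀)⟩
  · exact hgt hw0 hw
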